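/- The negative translation is an isomorphism between VFS and CPS: the maps (-)~/(-)≀/(-)⁻ from VFS to CPS and (-)×/(-)×ᵃ/(-)⁺ from CPS to VFS are mutually inverse bijections, and each translation maps a single reduction step to a single reduction step (in both directions). -/
import Mathlib


namespace Paper

mutual
/-- Terms of the value-filling style calculus VFS. -/
inductive VTm : Type
| up : VVal → VTm
| cv : VVal → VCtx → VTm
/-- Values of VFS. -/
inductive VVal : Type
| var : String → VVal
| lam : String → VTm → VVal
/-- Formal contexts of VFS: x.M or (W,x.M). -/
inductive VCtx : Type
| cont : String → VTm → VCtx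
| arg : VVal → String → VTm → VCtx
end

mutual
def VVal.sub (V : VVal) (y : String) : VVal → VVal
| .var z => if z = y then V else .var z
| .lam z M => if z = y then .lam z M else .lam z (VTm.sub V y M)
def VTm.sub (V : VVal) (y : String) : VTm → VTm
| .up W => .up (VVal.sub V y W)
| .cv W c => .cv (VVal.sub V y W) (VCtx.sub V y c)
def VCtx.sub (V : VVal) (y : String) : VCtx → VCtx
| .cont x M => .cont x (if x = y then M else VTm.sub V y M)
| .arg W x M => .arg (VVal.sub V y W) x (if x = y then M else VTm.sub V y M)
end

mutual
/-- The generalized cut Cv(M : c). -/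
def VTm.gcut : VTm → VCtx → VTm
| .up V, c => .cv V c
| .cv V c, c' => .cv V (VCtx.comp c c')
/-- Composition of formal contexts (c : c'). -/
def VCtx.comp : VCtx → VCtx → VCtx
| .cont x M, c' => .cont x (VTm.gcut M c')
| .arg W x M, c' => .arg W x (VTm.gcut M c')
end

mutual
/-- One-step reduction of VFS on terms, closed under all contexts. -/
inductive VStepT : VTm → VTm → Prop
| bv {x M V y N} :
    VStepT (.cv (.lam x M) (.arg V y N)) (.cv V (.cont x (VTm.gcut M (.cont y N))))
| sigmav {V y N} : VStepT (.cv V (.cont y N)) (VTm.sub V y N)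
| upC {V V'} : VStepV V V' → VStepT (.up V) (.up V')
| cvV {V V' c} : VStepV V V' → VStepT (.cv V c) (.cv V' c)
| cvC {V c c'} : VStepC c c' → VStepT (.cv V c) (.cv V c')
/-- One-step reduction of VFS on values. -/
inductive VStepV : VVal → VVal → Prop
| lamC {x M M'} : VStepT M M' → VStepV (.lam x M) (.lam x M')
/-- One-step reduction of VFS on formal contexts. -/
inductive VStepC : VCtx → VCtx → Prop
| contC {x M M'} : VStepT M M' → VStepC (.cont x M) (.cont x M')
| argV {W W' x M} : VStepV W W' → VStepC (.arg W x M) (.arg W' x M)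
| argT {W x M M'} : VStepT M M' → VStepC (.arg W x M) (.arg W x M')
end

mutual
/-- Commands of the (modified) CPS target. -/
inductive CCmd : Type
| kapp : CVal → CCmd
| capp : CCont → CVal → CCmd
| vapp : CVal → CVal → CCont → CCmd
/-- Continuations of CPS. -/
inductive CCont : Type
| abs : String → CCmd → CCont
/-- Values of CPS. -/
inductive CVal : Type
| var : String → CVal
| lam : String → CTm → CVal
/-- Terms of CPS. -/
inductive CTm : Type
| abk : CCmd → CTm
end

mutual
def CVal.sub (V : CVal) (x : String) : CVal → CVal
| .var z => if z = x then V else .var z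
| .lam z P => if z = x then .lam z P else .lam z (CTm.sub V x P)
def CCmd.sub (V : CVal) (x : String) : CCmd → CCmd
| .kapp W => .kapp (CVal.sub V x W)
| .capp K W => .capp (CCont.sub V x K) (CVal.sub V x W)
| .vapp A B K => .vapp (CVal.sub V x A) (CVal.sub V x B) (CCont.sub V x K)
def CCont.sub (V : CVal) (x : String) : CCont → CCont
| .abs z M => if z = x then .abs z M else .abs z (CCmd.sub V x M)
def CTm.sub (V : CVal) (x : String) : CTm → CTm
| .abk M => .abk (CCmd.sub V x M)
end

/-- Substitution [K/k]- of a continuation for the fixed covariable k. -/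
def ksub (K : CCont) : CCmd → CCmd
| .kapp V => .capp K V
| .capp (.abs x M) V => .capp (.abs x (ksub K M)) V
| .vapp V W (.abs x M) => .vapp V W (.abs x (ksub K M))

mutual
/-- One-step reduction of CPS on commands, closed under all contexts. -/
inductive CStepCmd : CCmd → CCmd → Prop
| sigmav {x M V} : CStepCmd (.capp (.abs x M) V) (CCmd.sub V x M)
| bv {x M W K} : CStepCmd (.vapp (.lam x (.abk M)) W K) (.capp (.abs x (ksub K M)) W)
| kappV {V V'} : CStepVal V V' → CStepCmd (.kapp V) (.kapp V')
| cappK {K K' V} : CStepCont K K' → CStepCmd (.capp K V) (.capp K' V)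
| cappV {K V V'} : CStepVal V V' → CStepCmd (.capp K V) (.capp K V')
| vapp1 {V V' W K} : CStepVal V V' → CStepCmd (.vapp V W K) (.vapp V' W K)
| vapp2 {V W W' K} : CStepVal W W' → CStepCmd (.vapp V W K) (.vapp V W' K)
| vapp3 {V W K K'} : CStepCont K K' → CStepCmd (.vapp V W K) (.vapp V W K')
/-- One-step reduction of CPS on continuations. -/
inductive CStepCont : CCont → CCont → Prop
| absC {x M M'} : CStepCmd M M' → CStepCont (.abs x M) (.abs x M')
/-- One-step reduction of CPS on values. -/
inductive CStepVal : CVal → CVal → Prop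
| lamC {x P P'} : CStepTm P P' → CStepVal (.lam x P) (.lam x P')
/-- One-step reduction of CPS on terms. -/
inductive CStepTm : CTm → CTm → Prop
| abkC {M M'} : CStepCmd M M' → CStepTm (.abk M) (.abk M')
end

mutual
/-- The negative translation M≀ : VFS terms to CPS commands. -/
def angT : VTm → CCmd
| .up V => .kapp (ngV V)
| .cv V (.cont x M) => .capp (.abs x (angT M)) (ngV V)
| .cv V (.arg W x M) => .vapp (ngV V) (ngV W) (.abs x (angT M))
/-- The negative translation V~ : VFS values to CPS values. -/
def ngV : VVal → CVal
| .var x => .var x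
| .lam x M => .lam x (.abk (angT M))
end

/-- The negative translation M⁻ = λk.M≀ : VFS terms to CPS terms. -/
def ngT (M : VTm) : CTm := .abk (angT M)

mutual
/-- The inverse translation P⁺ : CPS terms to VFS terms. -/
def posT : CTm → VTm
| .abk M => aposC M
/-- The inverse translation M× (on commands). -/
def aposC : CCmd → VTm
| .kapp V => .up (posV V)
| .capp (.abs x M) V => .cv (posV V) (.cont x (aposC M))
| .vapp V W (.abs x M) => .cv (posV V) (.arg (posV W) x (aposC M))
/-- The inverse translation on values. -/
def posV : CVal → VVal
| .var x => .var x
| .lam x P => .lam x (posT P)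
end

mutual
theorem pos_ngT : (M : VTm) → aposC (angT M) = M
| .up V => by simp [angT, aposC, pos_ngV V]
| .cv V (.cont x M) => by simp [angT, aposC, pos_ngV V, pos_ngT M]
| .cv V (.arg W x M) => by simp [angT, aposC, pos_ngV V, pos_ngV W, pos_ngT M]
theorem pos_ngV : (V : VVal) → posV (ngV V) = V
| .var x => rfl
| .lam x M => by simp [ngV, posV, posT, pos_ngT M]
end

mutual
theorem ng_posC : (M : CCmd) → angT (aposC M) = M
| .kapp V => by simp [aposC, angT, ng_posV V]
| .capp (.abs x M) V => by simp [aposC, angT, ng_posV V, ng_posC M]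
| .vapp V W (.abs x M) => by simp [aposC, angT, ng_posV V, ng_posV W, ng_posC M]
theorem ng_posV : (V : CVal) → ngV (posV V) = V
| .var x => rfl
| .lam x (.abk M) => by simp [posV, posT, ngV, ng_posC M]
end

mutual
theorem ang_sub : (V : VVal) → (y : String) → (M : VTm) →
    angT (VTm.sub V y M) = CCmd.sub (ngV V) y (angT M)
| V, y, .up W => by simp [VTm.sub, angT, CCmd.sub, ng_sub V y W]
| V, y, .cv W (.cont x M) => by
    by_cases h : x = y <;>
      simp [VTm.sub, VCtx.sub, angT, CCmd.sub, CCont.sub, h, ng_sub V y W, ang_sub V y M]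
| V, y, .cv W (.arg U x M) => by
    by_cases h : x = y <;>
      simp [VTm.sub, VCtx.sub, angT, CCmd.sub, CCont.sub, h, ng_sub V y W, ng_sub V y U,
        ang_sub V y M]
theorem ng_sub : (V : VVal) → (y : String) → (W : VVal) →
    ngV (VVal.sub V y W) = CVal.sub (ngV V) y (ngV W)
| V, y, .var z => by by_cases h : z = y <;> simp [VVal.sub, ngV, CVal.sub, h]
| V, y, .lam z M => by
    by_cases h : z = y <;> simp [VVal.sub, ngV, CVal.sub, CTm.sub, h, ang_sub V y M]
end

theorem ang_gcut : (M : VTm) → (y : String) → (N : VTm) →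
    angT (VTm.gcut M (.cont y N)) = ksub (.abs y (angT N)) (angT M)
| .up V, y, N => by simp [VTm.gcut, angT, ksub]
| .cv V (.cont x M), y, N => by
    simp [VTm.gcut, VCtx.comp, angT, ksub, ang_gcut M y N]
| .cv V (.arg W x M), y, N => by
    simp [VTm.gcut, VCtx.comp, angT, ksub, ang_gcut M y N]

mutual
theorem apos_sub : (V : CVal) → (y : String) → (M : CCmd) →
    aposC (CCmd.sub V y M) = VTm.sub (posV V) y (aposC M)
| V, y, .kapp W => by simp [CCmd.sub, aposC, VTm.sub, apos_subV V y W]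
| V, y, .capp (.abs x M) W => by
    by_cases h : x = y <;>
      simp [CCmd.sub, CCont.sub, aposC, VTm.sub, VCtx.sub, h, apos_subV V y W, apos_sub V y M]
| V, y, .vapp A B (.abs x M) => by
    by_cases h : x = y <;>
      simp [CCmd.sub, CCont.sub, aposC, VTm.sub, VCtx.sub, h, apos_subV V y A, apos_subV V y B,
        apos_sub V y M]
theorem apos_subV : (V : CVal) → (y : String) → (W : CVal) →
    posV (CVal.sub V y W) = VVal.sub (posV V) y (posV W)
| V, y, .var z => by by_cases h : z = y <;> simp [CVal.sub, posV, VVal.sub, h]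
| V, y, .lam z (.abk M) => by
    by_cases h : z = y <;> simp [CVal.sub, CTm.sub, posV, posT, VVal.sub, h, apos_sub V y M]
end

theorem apos_ksub : (M : CCmd) → (y : String) → (N : CCmd) →
    aposC (ksub (.abs y N) M) = VTm.gcut (aposC M) (.cont y (aposC N))
| .kapp V, y, N => by simp [ksub, aposC, VTm.gcut]
| .capp (.abs x M) V, y, N => by
    simp [ksub, aposC, VTm.gcut, VCtx.comp, apos_ksub M y N]
| .vapp V W (.abs x M), y, N => by
    simp [ksub, aposC, VTm.gcut, VCtx.comp, apos_ksub M y N]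

mutual
theorem simT : ∀ {M N : VTm}, VStepT M N → CStepCmd (angT M) (angT N)
| _, _, .bv (x := x) (M := M) (V := V) (y := y) (N := N) => by
    have h := CStepCmd.bv (x := x) (M := angT M) (W := ngV V) (K := .abs y (angT N))
    simpa [angT, ngV, ang_gcut M y N] using h
| _, _, .sigmav (V := V) (y := y) (N := N) => by
    have h := CStepCmd.sigmav (x := y) (M := angT N) (V := ngV V)
    simpa [angT, ang_sub V y N] using h
| _, _, .upC h => CStepCmd.kappV (simV h)
| _, _, .cvV (c := c) h => by
    cases c with
    | cont x M => exact CStepCmd.cappV (simV h)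
    | arg W x M => exact CStepCmd.vapp1 (simV h)
| _, _, .cvC h => by
    cases h with
    | contC h => exact CStepCmd.cappK (.absC (simT h))
    | argV h => exact CStepCmd.vapp2 (simV h)
    | argT h => exact CStepCmd.vapp3 (.absC (simT h))
theorem simV : ∀ {V W : VVal}, VStepV V W → CStepVal (ngV V) (ngV W)
| _, _, .lamC h => CStepVal.lamC (.abkC (simT h))
end

mutual
theorem cosimC : ∀ {M N : CCmd}, CStepCmd M N → VStepT (aposC M) (aposC N)
| _, _, .sigmav (x := x) (M := M) (V := V) => by
    have h := VStepT.sigmav (V := posV V) (y := x) (N := aposC M)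
    simpa [aposC, apos_sub V x M] using h
| _, _, .bv (x := x) (M := M) (W := W) (K := K) => by
    obtain ⟨y, N⟩ := K
    have h := VStepT.bv (x := x) (M := aposC M) (V := posV W) (y := y) (N := aposC N)
    simpa [aposC, posV, posT, apos_ksub M y N] using h
| _, _, .kappV h => VStepT.upC (cosimV h)
| _, _, .cappK (V := V) h => by
    cases h with
    | absC h => exact VStepT.cvC (.contC (cosimC h))
| _, _, .cappV (K := K) h => by
    obtain ⟨x, M⟩ := K
    exact VStepT.cvV (cosimV h)
| _, _, .vapp1 (K := K) h => by
    obtain ⟨x, M⟩ := K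
    exact VStepT.cvV (cosimV h)
| _, _, .vapp2 (K := K) h => by
    obtain ⟨x, M⟩ := K
    exact VStepT.cvC (.argV (cosimV h))
| _, _, .vapp3 h => by
    cases h with
    | absC h => exact VStepT.cvC (.argT (cosimC h))
theorem cosimV : ∀ {V W : CVal}, CStepVal V W → VStepV (posV V) (posV W)
| _, _, .lamC h => by
    cases h with
    | abkC h => exact VStepV.lamC (cosimC h)
end

/-- the negative translation is an isomorphism between VFS and CPS:
the maps are mutually inverse bijections and each single reduction step is mapped
to a single reduction step, in both directions. -/
theorem stmt14 :
    ((∀ M : VTm, posT (ngT M) = M ∧ aposC (angT M) = M) ∧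
     (∀ V : VVal, posV (ngV V) = V)) ∧
    ((∀ P : CTm, ngT (posT P) = P) ∧
     (∀ M : CCmd, angT (aposC M) = M) ∧
     (∀ V : CVal, ngV (posV V) = V)) ∧
    (∀ M N : VTm, VStepT M N → CStepCmd (angT M) (angT N)) ∧
    (∀ M N : VTm, VStepT M N → CStepTm (ngT M) (ngT N)) ∧
    (∀ M N : CCmd, CStepCmd M N → VStepT (aposC M) (aposC N)) ∧
    (∀ P Q : CTm, CStepTm P Q → VStepT (posT P) (posT Q)) := by
  refine ⟨⟨fun M => ⟨?_, pos_ngT M⟩, pos_ngV⟩,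
    ⟨fun P => ?_, ng_posC, ng_posV⟩,
    fun M N h => simT h, fun M N h => CStepTm.abkC (simT h),
    fun M N h => cosimC h, fun P Q h => ?_⟩
  · simp [ngT, posT, pos_ngT M]
  · obtain ⟨M⟩ := P; simp [posT, ngT, ng_posC M]
  · obtain ⟨M⟩ := P; obtain ⟨N⟩ := Q
    cases h with | abkC h => exact cosimC h

end Paper
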